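/- For n ≥ 4, the corona cor(K_n) of the complete graph K_n is total-Roman-domination edge-supercritical: γ_tR(cor(K_n)) = 2n and for every non-edge e, γ_tR(cor(K_n) + e) = 2n − 2. -/
import Mathlib


open SimpleGraph Finset

variable {V : Type*}

/-- `S` is a dominating set of `G`. -/
def Dominating (G : SimpleGraph V) (S : Finset V) : Prop :=
  ∀ v, v ∉ S → ∃ u ∈ S, G.Adj u v

/-- `S` is a total dominating set of `G`. -/
def TotalDominating (G : SimpleGraph V) (S : Finset V) : Prop :=
  ∀ v : V, ∃ u ∈ S, G.Adj u v

/-- The domination number γ(G). -/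
noncomputable def gamma (G : SimpleGraph V) [Fintype V] : ℕ :=
  sInf {n | ∃ S : Finset V, Dominating G S ∧ S.card = n}

/-- The total domination number γ_t(G). -/
noncomputable def gammaT (G : SimpleGraph V) [Fintype V] : ℕ :=
  sInf {n | ∃ S : Finset V, TotalDominating G S ∧ S.card = n}

/-- `f` is a total Roman dominating function on `G`. -/
def IsTRDF (G : SimpleGraph V) (f : V → ℕ) : Prop :=
  (∀ v, f v ≤ 2) ∧ (∀ v, f v = 0 → ∃ u, G.Adj u v ∧ f u = 2) ∧
    (∀ v, 0 < f v → ∃ u, G.Adj u v ∧ 0 < f u)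

/-- The total Roman domination number γ_tR(G). -/
noncomputable def gammaTR (G : SimpleGraph V) [Fintype V] : ℕ :=
  sInf {n | ∃ f : V → ℕ, IsTRDF G f ∧ ∑ v, f v = n}

/-- The graph `G + uv`. -/
def addEdge (G : SimpleGraph V) (u v : V) : SimpleGraph V :=
  G ⊔ SimpleGraph.fromEdgeSet {s(u, v)}

/-- The graph `G - uv`. -/
def deleteEdge (G : SimpleGraph V) (u v : V) : SimpleGraph V :=
  G.deleteEdges {s(u, v)}

/-- `G` has no isolated vertices. -/
def NoIsolated (G : SimpleGraph V) : Prop := ∀ v : V, ∃ u, G.Adj u v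

/-- The degree of `v` in `G`. -/
noncomputable def degreeN (G : SimpleGraph V) (v : V) : ℕ :=
  {u | G.Adj v u}.ncard

/-- The corona of the complete graph `K_n`: each vertex `Sum.inl i` of `K_n` is joined
to its own pendant vertex `Sum.inr i`. -/
def coronaK (n : ℕ) : SimpleGraph (Fin n ⊕ Fin n) :=
  SimpleGraph.fromRel (fun a b =>
    match a, b with
    | Sum.inl _, Sum.inl _ => True
    | Sum.inl i, Sum.inr j => i = j
    | _, _ => False)


section Aux

lemma cor_ll {n : ℕ} {i j : Fin n} : (coronaK n).Adj (Sum.inl i) (Sum.inl j) ↔ i ≠ j := by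
  simp [coronaK]
lemma cor_lr {n : ℕ} {i j : Fin n} : (coronaK n).Adj (Sum.inl i) (Sum.inr j) ↔ i = j := by
  simp [coronaK]
lemma cor_rl {n : ℕ} {i j : Fin n} : (coronaK n).Adj (Sum.inr i) (Sum.inl j) ↔ j = i := by
  simp [coronaK]
lemma cor_rr {n : ℕ} {i j : Fin n} : ¬ (coronaK n).Adj (Sum.inr i) (Sum.inr j) := by
  simp [coronaK]

lemma addEdge_adj (G : SimpleGraph V) (u v a b : V) :
    (addEdge G u v).Adj a b ↔ G.Adj a b ∨ (a ≠ b ∧ ((a = u ∧ b = v) ∨ (a = v ∧ b = u))) := by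
  simp [addEdge, Sym2.eq_iff, and_comm]

lemma addEdge_comm (G : SimpleGraph V) (u v : V) : addEdge G u v = addEdge G v u := by
  unfold addEdge
  rw [Sym2.eq_swap]

lemma gtr_le [Fintype V] (G : SimpleGraph V) (f : V → ℕ) (hf : IsTRDF G f) :
    gammaTR G ≤ ∑ v, f v :=
  Nat.sInf_le ⟨f, hf, rfl⟩

lemma gtr_ge [Fintype V] (G : SimpleGraph V) (m : ℕ) (f₀ : V → ℕ) (hf₀ : IsTRDF G f₀)
    (h : ∀ f, IsTRDF G f → m ≤ ∑ v, f v) : m ≤ gammaTR G :=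
  le_csInf ⟨∑ v, f₀ v, f₀, hf₀, rfl⟩ (by rintro b ⟨f, hf, rfl⟩; exact h f hf)

lemma avoid3 {n : ℕ} (hn : 4 ≤ n) (a b c : Fin n) : ∃ k : Fin n, k ≠ a ∧ k ≠ b ∧ k ≠ c := by
  by_contra h
  push_neg at h
  have hsub : (univ : Finset (Fin n)) ⊆ {a, b, c} := by
    intro k _
    by_cases h1 : k = a
    · simp [h1]
    by_cases h2 : k = b
    · simp [h2]
    simp [h k h1 h2]
  have hc := Finset.card_le_card hsub
  have h3 : ({a, b, c} : Finset (Fin n)).card ≤ 3 := by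
    apply le_trans (Finset.card_insert_le _ _)
    have := Finset.card_insert_le b ({c} : Finset (Fin n))
    simp at this ⊢
    omega
  simp [Finset.card_univ] at hc
  omega

/-- If the only neighbour of the pendant `inr k` is `inl k`, the pair gets weight ≥ 2. -/
lemma pair_ge {n : ℕ} {H : SimpleGraph (Fin n ⊕ Fin n)} {f : Fin n ⊕ Fin n → ℕ}
    (hf : IsTRDF H f) (k : Fin n)
    (hp : ∀ a, H.Adj a (Sum.inr k) → a = Sum.inl k) :
    2 ≤ f (Sum.inl k) + f (Sum.inr k) := by
  rcases Nat.eq_zero_or_pos (f (Sum.inr k)) with h0 | hpos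
  · obtain ⟨u, hu, hu2⟩ := hf.2.1 _ h0
    rw [hp u hu] at hu2
    omega
  · obtain ⟨u, hu, hu2⟩ := hf.2.2 _ hpos
    rw [hp u hu] at hu2
    omega

/-- Combined bound for the two pairs touched by a new edge `inr i — inr j`. -/
lemma pair2_ge {n : ℕ} {H : SimpleGraph (Fin n ⊕ Fin n)} {f : Fin n ⊕ Fin n → ℕ}
    (hf : IsTRDF H f) (i j : Fin n)
    (hpi : ∀ a, H.Adj a (Sum.inr i) → a = Sum.inl i ∨ a = Sum.inr j)
    (hpj : ∀ a, H.Adj a (Sum.inr j) → a = Sum.inl j ∨ a = Sum.inr i) :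
    2 ≤ f (Sum.inl i) + f (Sum.inr i) + (f (Sum.inl j) + f (Sum.inr j)) := by
  rcases Nat.eq_zero_or_pos (f (Sum.inr i)) with h0 | hpos
  · obtain ⟨u, hu, hu2⟩ := hf.2.1 _ h0
    rcases hpi u hu with h | h <;> rw [h] at hu2 <;> omega
  · rcases Nat.eq_zero_or_pos (f (Sum.inr j)) with h0' | hpos'
    · obtain ⟨u, hu, hu2⟩ := hf.2.1 _ h0'
      rcases hpj u hu with h | h <;> rw [h] at hu2 <;> omega
    · omega

end Aux


section Main

lemma pendant_addEdge {n : ℕ} (u v : Fin n ⊕ Fin n) (k : Fin n)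
    (hu : u ≠ Sum.inr k) (hv : v ≠ Sum.inr k) :
    ∀ a, (addEdge (coronaK n) u v).Adj a (Sum.inr k) → a = Sum.inl k := by
  intro a ha
  rw [addEdge_adj] at ha
  rcases ha with h | ⟨-, ⟨h1, h2⟩ | ⟨h1, h2⟩⟩
  · rcases a with m | m
    · exact congrArg Sum.inl (cor_lr.mp h)
    · exact absurd h cor_rr
  · exact absurd h2.symm hv
  · exact absurd h2.symm hu

lemma pendant_corona {n : ℕ} (k : Fin n) :
    ∀ a, (coronaK n).Adj a (Sum.inr k) → a = Sum.inl k := by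
  rintro (m | m) h
  · exact congrArg Sum.inl (cor_lr.mp h)
  · exact absurd h cor_rr

lemma sum_if_erase1 {n : ℕ} (j : Fin n) :
    ∑ k : Fin n, (if k = j then 0 else 2) = 2 * n - 2 := by
  rw [← Finset.sum_subset (Finset.subset_univ (univ.erase j)) (fun x _ hx => by
      have hx' : x = j := by simpa using hx
      simp [hx'])]
  rw [Finset.sum_congr rfl (fun x hx => if_neg (Finset.ne_of_mem_erase hx))]
  have hc : (univ.erase j).card = n - 1 := by
    simp [Finset.card_erase_of_mem]
  rw [Finset.sum_const, hc, smul_eq_mul]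
  omega

lemma sum_if_erase2 {n : ℕ} {i j : Fin n} (hij : i ≠ j) :
    ∑ k : Fin n, (if k = i ∨ k = j then 0 else 2) = 2 * n - 4 := by
  have hmem : j ∈ univ.erase i := Finset.mem_erase.mpr ⟨hij.symm, Finset.mem_univ j⟩
  rw [← Finset.sum_subset (Finset.subset_univ ((univ.erase i).erase j)) (fun x _ hx => by
      have hx' : x = j ∨ x = i := by
        by_contra hc
        push_neg at hc
        exact hx (Finset.mem_erase.mpr ⟨hc.1, Finset.mem_erase.mpr ⟨hc.2, Finset.mem_univ x⟩⟩)
      rcases hx' with rfl | rfl <;> simp)]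
  rw [Finset.sum_congr rfl (fun x hx => by
      have h1 : x ≠ j := (Finset.mem_erase.mp hx).1
      have h2 : x ≠ i := (Finset.mem_erase.mp (Finset.mem_erase.mp hx).2).1
      exact if_neg (by simp [h1, h2]))]
  have hc : ((univ.erase i).erase j).card = n - 2 := by
    rw [Finset.card_erase_of_mem hmem, Finset.card_erase_of_mem (Finset.mem_univ i)]
    simp only [Finset.card_univ, Fintype.card_fin]
    omega
  rw [Finset.sum_const, hc, smul_eq_mul]
  omega

lemma sum_ind2 {n : ℕ} {i j : Fin n} (hij : i ≠ j) :
    ∑ k : Fin n, (if k = i ∨ k = j then 1 else 0) = 2 := by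
  have key : ∀ k : Fin n, (if k = i ∨ k = j then (1:ℕ) else 0) =
      (if k = i then 1 else 0) + (if k = j then 1 else 0) := by
    intro k
    by_cases h1 : k = i
    · subst h1; simp [hij]
    · by_cases h2 : k = j <;> simp [h1, h2, hij.symm]
  rw [Finset.sum_congr rfl (fun k _ => key k), Finset.sum_add_distrib]
  simp

/-- γ_tR of the corona itself. -/
lemma corona_gtr {n : ℕ} (hn : 4 ≤ n) : gammaTR (coronaK n) = 2 * n := by
  set f₀ : Fin n ⊕ Fin n → ℕ := Sum.elim (fun _ => 2) (fun _ => 0) with hf₀def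
  have hf₀ : IsTRDF (coronaK n) f₀ := by
    refine ⟨?_, ?_, ?_⟩
    · rintro (k | k) <;> simp [hf₀def]
    · rintro (k | k) h
      · simp [hf₀def] at h
      · exact ⟨Sum.inl k, cor_lr.mpr rfl, rfl⟩
    · rintro (k | k) h
      · obtain ⟨m, hm, -, -⟩ := avoid3 hn k k k
        exact ⟨Sum.inl m, cor_ll.mpr hm, by simp [hf₀def]⟩
      · simp [hf₀def] at h
  have hsum : ∑ v, f₀ v = 2 * n := by
    rw [Fintype.sum_sum_type]
    simp [hf₀def, Finset.card_univ, mul_comm]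
  have h1 : gammaTR (coronaK n) ≤ 2 * n := by
    have := gtr_le _ f₀ hf₀; rwa [hsum] at this
  have h2 : 2 * n ≤ gammaTR (coronaK n) := by
    refine gtr_ge _ _ f₀ hf₀ ?_
    intro f hf
    rw [Fintype.sum_sum_type, ← Finset.sum_add_distrib]
    calc 2 * n = ∑ _k : Fin n, 2 := by simp [Finset.card_univ, mul_comm]
      _ ≤ ∑ k : Fin n, (f (Sum.inl k) + f (Sum.inr k)) :=
          Finset.sum_le_sum (fun k _ => pair_ge hf k (pendant_corona k))
  omega

/-- Case: adding an edge from `inl i` to `inr j` with `i ≠ j`. -/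
lemma caseA {n : ℕ} (hn : 4 ≤ n) {i j : Fin n} (hij : i ≠ j) :
    gammaTR (addEdge (coronaK n) (Sum.inl i) (Sum.inr j)) = 2 * n - 2 := by
  set H := addEdge (coronaK n) (Sum.inl i) (Sum.inr j) with hHdef
  set f₀ : Fin n ⊕ Fin n → ℕ :=
    Sum.elim (fun k => if k = j then 0 else 2) (fun _ => 0) with hf₀def
  have hf₀ : IsTRDF H f₀ := by
    refine ⟨?_, ?_, ?_⟩
    · rintro (k | k) <;> simp [hf₀def] <;> split <;> omega
    · rintro (k | k) h
      · simp only [hf₀def, Sum.elim_inl] at h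
        split at h
        · next hk =>
          subst hk
          obtain ⟨m, hm1, hm2, -⟩ := avoid3 hn i k k
          refine ⟨Sum.inl m, ?_, by simp [hf₀def, hm2]⟩
          rw [hHdef, addEdge_adj]
          exact Or.inl (cor_ll.mpr hm2)
        · omega
      · by_cases hk : k = j
        · subst hk
          refine ⟨Sum.inl i, ?_, by simp [hf₀def, hij]⟩
          rw [hHdef, addEdge_adj]
          exact Or.inr ⟨by simp, Or.inl ⟨rfl, rfl⟩⟩
        · refine ⟨Sum.inl k, ?_, by simp [hf₀def, hk]⟩
          rw [hHdef, addEdge_adj]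
          exact Or.inl (cor_lr.mpr rfl)
    · rintro (k | k) h
      · have hk : k ≠ j := by
          intro e; simp [hf₀def, e] at h
        obtain ⟨m, hm1, hm2, -⟩ := avoid3 hn k j j
        refine ⟨Sum.inl m, ?_, by simp [hf₀def, hm2]⟩
        rw [hHdef, addEdge_adj]
        exact Or.inl (cor_ll.mpr hm1)
      · simp [hf₀def] at h
  have hsum : ∑ v, f₀ v = 2 * n - 2 := by
    rw [Fintype.sum_sum_type]
    simp only [hf₀def, Sum.elim_inl, Sum.elim_inr]
    rw [sum_if_erase1 j]
    simp
  have h1 : gammaTR H ≤ 2 * n - 2 := by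
    have := gtr_le _ f₀ hf₀; rwa [hsum] at this
  have h2 : 2 * n - 2 ≤ gammaTR H := by
    refine gtr_ge _ _ f₀ hf₀ ?_
    intro f hf
    rw [Fintype.sum_sum_type, ← Finset.sum_add_distrib]
    have key : ∀ k ∈ univ.erase j, 2 ≤ f (Sum.inl k) + f (Sum.inr k) := by
      intro k hk
      have hkj : k ≠ j := Finset.ne_of_mem_erase hk
      exact pair_ge hf k (pendant_addEdge _ _ k (by simp) (by simp [hkj.symm]))
    have hle : ∑ k ∈ univ.erase j, (2:ℕ) ≤
        ∑ k ∈ univ.erase j, (f (Sum.inl k) + f (Sum.inr k)) :=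
      Finset.sum_le_sum key
    have hsub : ∑ k ∈ univ.erase j, (f (Sum.inl k) + f (Sum.inr k)) ≤
        ∑ k : Fin n, (f (Sum.inl k) + f (Sum.inr k)) :=
      Finset.sum_le_sum_of_subset (Finset.subset_univ _)
    have hc : (univ.erase j).card = n - 1 := by simp [Finset.card_erase_of_mem]
    rw [Finset.sum_const, hc, smul_eq_mul] at hle
    omega
  omega

/-- Case: adding an edge from `inr i` to `inr j` with `i ≠ j`. -/
lemma caseB {n : ℕ} (hn : 4 ≤ n) {i j : Fin n} (hij : i ≠ j) :
    gammaTR (addEdge (coronaK n) (Sum.inr i) (Sum.inr j)) = 2 * n - 2 := by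
  set H := addEdge (coronaK n) (Sum.inr i) (Sum.inr j) with hHdef
  set f₀ : Fin n ⊕ Fin n → ℕ :=
    Sum.elim (fun k => if k = i ∨ k = j then 0 else 2)
      (fun k => if k = i ∨ k = j then 1 else 0) with hf₀def
  have hf₀ : IsTRDF H f₀ := by
    refine ⟨?_, ?_, ?_⟩
    · rintro (k | k) <;> simp only [hf₀def, Sum.elim_inl, Sum.elim_inr] <;> split <;> omega
    · rintro (k | k) h
      · simp only [hf₀def, Sum.elim_inl] at h
        split at h
        · obtain ⟨m, hm1, hm2, hm3⟩ := avoid3 hn i j k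
          refine ⟨Sum.inl m, ?_, by simp [hf₀def, hm1, hm2]⟩
          rw [hHdef, addEdge_adj]
          exact Or.inl (cor_ll.mpr hm3)
        · omega
      · simp only [hf₀def, Sum.elim_inr] at h
        split at h
        · omega
        · next hk =>
          refine ⟨Sum.inl k, ?_, by simp only [hf₀def, Sum.elim_inl]; rw [if_neg hk]⟩
          rw [hHdef, addEdge_adj]
          exact Or.inl (cor_lr.mpr rfl)
    · rintro (k | k) h
      · have hk : ¬(k = i ∨ k = j) := by
          intro hc
          simp only [hf₀def, Sum.elim_inl, if_pos hc] at h
          omega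
        obtain ⟨m, hm1, hm2, hm3⟩ := avoid3 hn i j k
        refine ⟨Sum.inl m, ?_, by simp [hf₀def, hm1, hm2]⟩
        rw [hHdef, addEdge_adj]
        exact Or.inl (cor_ll.mpr hm3)
      · have hk : k = i ∨ k = j := by
          by_contra hc
          simp only [hf₀def, Sum.elim_inr, if_neg hc] at h
          omega
        rcases hk with rfl | rfl
        · refine ⟨Sum.inr j, ?_, by simp [hf₀def]⟩
          rw [hHdef, addEdge_adj]
          exact Or.inr ⟨by simp [hij.symm], Or.inr ⟨rfl, rfl⟩⟩
        · refine ⟨Sum.inr i, ?_, by simp [hf₀def]⟩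
          rw [hHdef, addEdge_adj]
          exact Or.inr ⟨by simp [hij], Or.inl ⟨rfl, rfl⟩⟩
  have hsum : ∑ v, f₀ v = 2 * n - 2 := by
    rw [Fintype.sum_sum_type]
    simp only [hf₀def, Sum.elim_inl, Sum.elim_inr]
    rw [sum_if_erase2 hij, sum_ind2 hij]
    omega
  have h1 : gammaTR H ≤ 2 * n - 2 := by
    have := gtr_le _ f₀ hf₀; rwa [hsum] at this
  have h2 : 2 * n - 2 ≤ gammaTR H := by
    refine gtr_ge _ _ f₀ hf₀ ?_
    intro f hf
    rw [Fintype.sum_sum_type, ← Finset.sum_add_distrib]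
    set g : Fin n → ℕ := fun k => f (Sum.inl k) + f (Sum.inr k) with hgdef
    show 2 * n - 2 ≤ ∑ k : Fin n, g k
    have hpi : ∀ a, H.Adj a (Sum.inr i) → a = Sum.inl i ∨ a = Sum.inr j := by
      intro a ha
      rw [hHdef, addEdge_adj] at ha
      rcases ha with h | ⟨-, ⟨h1', h2'⟩ | ⟨h1', h2'⟩⟩
      · exact Or.inl (pendant_corona i a h)
      · exact absurd h2' (by simp [hij])
      · exact Or.inr h1'
    have hpj : ∀ a, H.Adj a (Sum.inr j) → a = Sum.inl j ∨ a = Sum.inr i := by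
      intro a ha
      rw [hHdef, addEdge_adj] at ha
      rcases ha with h | ⟨-, ⟨h1', h2'⟩ | ⟨h1', h2'⟩⟩
      · exact Or.inl (pendant_corona j a h)
      · exact Or.inr h1'
      · exact absurd h2' (by simp [hij.symm])
    have hpair2 : 2 ≤ g i + g j := pair2_ge hf i j hpi hpj
    have key : ∀ k ∈ (univ.erase i).erase j, 2 ≤ g k := by
      intro k hk
      have h1' : k ≠ j := (Finset.mem_erase.mp hk).1
      have h2' : k ≠ i := (Finset.mem_erase.mp (Finset.mem_erase.mp hk).2).1
      exact pair_ge hf k (pendant_addEdge _ _ k (by simp [h2'.symm])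
        (by simp [h1'.symm]))
    have hmem : j ∈ univ.erase i := Finset.mem_erase.mpr ⟨hij.symm, Finset.mem_univ j⟩
    have hsplit1 : ∑ k : Fin n, g k = g i + ∑ k ∈ univ.erase i, g k :=
      (Finset.add_sum_erase _ _ (Finset.mem_univ i)).symm
    have hsplit2 : ∑ k ∈ univ.erase i, g k = g j + ∑ k ∈ (univ.erase i).erase j, g k :=
      (Finset.add_sum_erase _ _ hmem).symm
    have hle : ∑ k ∈ (univ.erase i).erase j, (2:ℕ) ≤ ∑ k ∈ (univ.erase i).erase j, g k :=
      Finset.sum_le_sum key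
    have hc : ((univ.erase i).erase j).card = n - 2 := by
      rw [Finset.card_erase_of_mem hmem, Finset.card_erase_of_mem (Finset.mem_univ i)]
      simp only [Finset.card_univ, Fintype.card_fin]
      omega
    rw [Finset.sum_const, hc, smul_eq_mul] at hle
    omega
  omega

end Main

theorem stmt10 (n : ℕ) (hn : 4 ≤ n) :
    gammaTR (coronaK n) = 2 * n ∧
      ∀ u v : Fin n ⊕ Fin n, u ≠ v → ¬(coronaK n).Adj u v →
        gammaTR (addEdge (coronaK n) u v) = 2 * n - 2 := by
  refine ⟨corona_gtr hn, ?_⟩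
  rintro (i | i) (j | j) huv hadj
  · exact absurd (cor_ll.mpr (fun e => huv (congrArg Sum.inl e))) hadj
  · have hij : i ≠ j := by rintro rfl; exact hadj (cor_lr.mpr rfl)
    exact caseA hn hij
  · have hij : i ≠ j := by rintro rfl; exact hadj (cor_rl.mpr rfl)
    rw [addEdge_comm]
    exact caseA hn hij.symm
  · have hij : i ≠ j := by rintro rfl; exact huv rfl
    exact caseB hn hij
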